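/- Let V be an n-dimensional vector space over F_q with basis {v_1, ..., v_n}, let V' = span{v_2, ..., v_n}, and let F be the family of all 2-dimensional subspaces of the form span{v_1, w} where w ranges over nonzero vectors of V' (one subspace per 1-dimensional subspace of V'). Then |F| = [n-1]_q = (q^(n-1) - 1)/(q - 1), and F is a fractional {1/2}-intersecting family: any two distinct members intersect in a subspace of dimension exactly 1 = (1/2)·2. -/

import Mathlib

/-- The q-integer `[m]_q = 1 + q + ⋯ + q^(m-1)`, the number of 1-dimensional
subspaces of an `m`-dimensional space over `F_q`. -/
def qint (q m : ℕ) : ℕ := ∑ i ∈ Finset.range m, q ^ i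

/-!
The members of `𝓕` are the planes `X ⊔ 𝔽 ∙ v₀` through the fixed line `𝔽 ∙ v₀`, with `X` a line of
`V'`. Since `v₀ ∉ V'`, the modular law gives `(X ⊔ 𝔽 ∙ v₀) ⊓ V' = X`, so `X ↦ X ⊔ 𝔽 ∙ v₀` is a
bijection from the lines of `V'` onto `𝓕`, and these lines are the points of `ℙ(V')`, of which
there are `[n-1]_q`. Two distinct planes through a common line meet in exactly that line.
-/

open Module Submodule

lemma card_finrank_eq_one_eq_qint {K W : Type*} [DivisionRing K] [Finite K]
    [AddCommGroup W] [Module K W] :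
    Nat.card {H : Submodule K W // finrank K H = 1} = qint (Nat.card K) (finrank K W) :=
  (Nat.card_congr (Projectivization.equivSubmodule K W)).symm.trans
    (Projectivization.card_of_finrank K W rfl)

section

variable {K M : Type*} [DivisionRing K] [AddCommGroup M] [Module K M]

lemma ncard_finrank_eq_one_le [Finite K] (P : Submodule K M) :
    {X : Submodule K M | X ≤ P ∧ finrank K X = 1}.ncard = qint (Nat.card K) (finrank K P) := by
  have himage : {X : Submodule K M | X ≤ P ∧ finrank K X = 1} =
      map P.subtype '' {Y : Submodule K P | finrank K Y = 1} := by
    ext X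
    constructor
    · rintro ⟨hXP, hX⟩
      refine ⟨comap P.subtype X, ?_, by rwa [map_comap_subtype, inf_eq_right]⟩
      rwa [Set.mem_ofPred_eq, ← finrank_map_subtype_eq, map_comap_subtype, inf_eq_right.mpr hXP]
    · rintro ⟨Y, hY, rfl⟩
      exact ⟨map_subtype_le P Y, (finrank_map_subtype_eq P Y).trans hY⟩
  rw [himage, Set.ncard_image_of_injective _ (map_injective_of_injective P.injective_subtype),
    ← Nat.card_coe_set_eq]
  exact card_finrank_eq_one_eq_qint

variable {P X : Submodule K M} {u : M}

lemma sup_span_singleton_inf_eq (hX : X ≤ P) (hu : u ∉ P) : (X ⊔ K ∙ u) ⊓ P = X := by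
  rw [sup_inf_assoc_of_le _ hX, (disjoint_span_singleton.mpr (absurd · hu)).symm.eq_bot,
    sup_bot_eq]

lemma injOn_sup_span_singleton (hu : u ∉ P) : Set.InjOn (· ⊔ K ∙ u) {X | X ≤ P} :=
  fun X hX Y hY hXY ↦ by
    rw [← sup_span_singleton_inf_eq hX hu, ← sup_span_singleton_inf_eq hY hu]
    exact congrArg (· ⊓ P) hXY

variable [FiniteDimensional K M]

lemma finrank_sup_span_singleton (hX : X ≤ P) (hu : u ∉ P) :
    finrank K ↥(X ⊔ K ∙ u) = finrank K X + 1 := by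
  have hdisj : Disjoint X (K ∙ u) := disjoint_span_singleton.mpr (fun huX ↦ absurd (hX huX) hu)
  have h := finrank_sup_add_finrank_inf_eq X (K ∙ u)
  rwa [hdisj.eq_bot, finrank_bot, add_zero,
    finrank_span_singleton (ne_of_mem_of_not_mem P.zero_mem hu).symm] at h

lemma finrank_inf_eq_of_ne {S U W : Submodule K M} (hSU : S ≤ U) (hSW : S ≤ W)
    (hU : finrank K U = finrank K S + 1) (hW : finrank K W = finrank K S + 1) (hUW : U ≠ W) :
    finrank K ↥(U ⊓ W) = finrank K S := by
  have hlower : finrank K S ≤ finrank K ↥(U ⊓ W) := finrank_mono (le_inf hSU hSW)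
  have hproper : finrank K ↥(U ⊓ W) ≠ finrank K S + 1 := fun h ↦ hUW <|
    (eq_of_le_of_finrank_eq inf_le_left (h.trans hU.symm)).symm.trans
      (eq_of_le_of_finrank_eq inf_le_right (h.trans hW.symm))
  have hupper : finrank K ↥(U ⊓ W) ≤ finrank K S + 1 := hU ▸ finrank_mono inf_le_left
  omega

end

lemma Module.Basis.finrank_span_image_ne {K M ι : Type*} [DivisionRing K] [AddCommGroup M]
    [Module K M] [Fintype ι] [DecidableEq ι] (b : Basis ι K M) (i : ι) :
    finrank K (span K (b '' {j | j ≠ i})) = Fintype.card ι - 1 := by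
  rw [Set.image_eq_range]
  exact (finrank_span_eq_card (b.linearIndependent.comp _ Subtype.val_injective)).trans (by simp)

theorem bisection_closed_example_general
    {𝔽 V : Type*} [Field 𝔽] [Fintype 𝔽]
    [AddCommGroup V] [Module 𝔽 V]
    (q n : ℕ) (hq : Fintype.card 𝔽 = q)
    (hn : 0 < n) (v : Module.Basis (Fin n) 𝔽 V) :
    let V' : Submodule 𝔽 V := Submodule.span 𝔽 (⇑v '' {i | i ≠ ⟨0, hn⟩})
    let 𝓕 : Set (Submodule 𝔽 V) :=
      {W | ∃ X : Submodule 𝔽 V, X ≤ V' ∧ Module.finrank 𝔽 X = 1 ∧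
        W = X ⊔ Submodule.span 𝔽 {v ⟨0, hn⟩}}
    (∀ W ∈ 𝓕, Module.finrank 𝔽 W = 2)
    ∧ 𝓕.ncard = qint q (n - 1)
    ∧ ∀ U ∈ 𝓕, ∀ W ∈ 𝓕, U ≠ W →
        2 * Module.finrank 𝔽 ↥(U ⊓ W) = Module.finrank 𝔽 U
        ∧ Module.finrank 𝔽 ↥(U ⊓ W) = 1 := by
  intro V' 𝓕
  have : FiniteDimensional 𝔽 V := .of_basis v
  have hv₀ : v ⟨0, hn⟩ ∉ V' := v.linearIndependent.notMem_span_image (by simp)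
  have hline : finrank 𝔽 (𝔽 ∙ v ⟨0, hn⟩) = 1 := finrank_span_singleton (v.ne_zero _)
  have hdim : ∀ W ∈ 𝓕, finrank 𝔽 W = finrank 𝔽 (𝔽 ∙ v ⟨0, hn⟩) + 1 := by
    rintro _ ⟨X, hXV', hX, rfl⟩
    rw [finrank_sup_span_singleton hXV' hv₀, hX, hline]
  have h𝓕 : 𝓕 = (· ⊔ 𝔽 ∙ v ⟨0, hn⟩) '' {X | X ≤ V' ∧ finrank 𝔽 X = 1} := by
    ext W
    simp only [𝓕, Set.mem_image, Set.mem_ofPred_eq, and_assoc, eq_comm]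
  refine ⟨fun W hW ↦ by rw [hdim W hW, hline], ?_, ?_⟩
  · rw [h𝓕, ((injOn_sup_span_singleton hv₀).mono fun X hX ↦ hX.1).ncard_image,
      ncard_finrank_eq_one_le, Nat.card_eq_fintype_card, hq, v.finrank_span_image_ne,
      Fintype.card_fin]
  · intro U hU W hW hUW
    have hS : ∀ Y ∈ 𝓕, 𝔽 ∙ v ⟨0, hn⟩ ≤ Y := by
      rintro _ ⟨X, -, -, rfl⟩
      exact le_sup_right
    have hinf := finrank_inf_eq_of_ne (hS U hU) (hS W hW) (hdim U hU) (hdim W hW) hUW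
    rw [hdim U hU, hinf, hline]
    exact ⟨rfl, rfl⟩

theorem bisection_closed_example
    {𝔽 V : Type*} [Field 𝔽] [Fintype 𝔽]
    [AddCommGroup V] [Module 𝔽 V] [FiniteDimensional 𝔽 V]
    (q n : ℕ) (hq : Fintype.card 𝔽 = q) (hnn : Module.finrank 𝔽 V = n)
    (hn : 0 < n) (v : Module.Basis (Fin n) 𝔽 V) :
    let V' : Submodule 𝔽 V := Submodule.span 𝔽 (⇑v '' {i | i ≠ ⟨0, hn⟩})
    let 𝓕 : Set (Submodule 𝔽 V) :=
      {W | ∃ X : Submodule 𝔽 V, X ≤ V' ∧ Module.finrank 𝔽 X = 1 ∧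
        W = X ⊔ Submodule.span 𝔽 {v ⟨0, hn⟩}}
    (∀ W ∈ 𝓕, Module.finrank 𝔽 W = 2)
    ∧ 𝓕.ncard = qint q (n - 1)
    ∧ ∀ U ∈ 𝓕, ∀ W ∈ 𝓕, U ≠ W →
        2 * Module.finrank 𝔽 ↥(U ⊓ W) = Module.finrank 𝔽 U
        ∧ Module.finrank 𝔽 ↥(U ⊓ W) = 1 :=
  bisection_closed_example_general q n hq hn v
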